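/- arXiv:1210.6416 — 3 statements merged into one kernel-verified Lean document; each statement's English description precedes it below -/
import Mathlib

section
/- Let T > 0, let K : (0,T) → [0,∞) be integrable on (0,T), let C ≥ 0, and let g : [0,T] → [0,∞) be a bounded measurable function satisfying g(t) ≤ C ∫₀ᵗ K(t−s) g(s) ds for every t ∈ [0,T]. Then g(t) = 0 for every t ∈ [0,T]. -/
/-!
By absolute continuity of the integral, `C ∫₀^ε K ≤ 1/2` for some `ε ∈ (0, T]`. If `g` vanishes
on `[0, a]`, then for `t ≤ a + ε` only the values of `g` on `(a, t)` and of `K` on `(0, ε)` enter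
the convolution, so any bound `c` for `g` on `[0, a + ε]` improves to `c / 2`; starting from the
bound `M` this forces `g = 0` on `[0, a + ε]`. Steps of length `ε` then cover `[0, T]`.
-/

open MeasureTheory Set Filter Topology

theorem nonpos_of_forall_le_imp_le_half {α : Type*} {s : Set α} {f : α → ℝ} {M : ℝ}
    (hM : ∀ x ∈ s, f x ≤ M) (hhalf : ∀ c, (∀ x ∈ s, f x ≤ c) → ∀ x ∈ s, f x ≤ c / 2) :
    ∀ x ∈ s, f x ≤ 0 := by
  have hpow : ∀ n : ℕ, ∀ x ∈ s, f x ≤ M * (1 / 2) ^ n := by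
    intro n
    induction n with
    | zero => simpa using hM
    | succ n ih => exact fun x hx => (hhalf _ ih x hx).trans_eq (by ring)
  have hlim : Tendsto (fun n : ℕ => M * (1 / 2 : ℝ) ^ n) atTop (𝓝 0) := by
    simpa using (tendsto_pow_atTop_nhds_zero_of_lt_one (by norm_num)
      (by norm_num : (1 / 2 : ℝ) < 1)).const_mul M
  exact fun x hx => ge_of_tendsto' hlim fun n => hpow n x hx

theorem tendsto_setIntegral_Ioo_nhdsGT_zero {K : ℝ → ℝ} {T : ℝ} (hT : 0 < T)
    (hK : IntegrableOn K (Ioo 0 T)) :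
    Tendsto (fun ε => ∫ u in Ioo 0 ε, K u) (𝓝[>] 0) (𝓝 0) := by
  have hvol : Tendsto (fun ε => volume (Ioo (0 : ℝ) ε)) (𝓝[>] 0) (𝓝 0) := by
    simpa using (ENNReal.tendsto_ofReal (tendsto_id (x := 𝓝 (0 : ℝ)))).mono_left
      nhdsWithin_le_nhds
  refine ((integrable_indicator_iff measurableSet_Ioo).2 hK).tendsto_setIntegral_nhds_zero hvol
    |>.congr' ?_
  filter_upwards [Ioc_mem_nhdsGT hT] with ε hε
  rw [setIntegral_indicator measurableSet_Ioo,
    inter_eq_self_of_subset_left (Ioo_subset_Ioo_right hε.2)]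

theorem setIntegral_Ioo_comp_sub_left {K : ℝ → ℝ} (a t : ℝ) :
    ∫ s in Ioo a t, K (t - s) = ∫ u in Ioo 0 (t - a), K u := by
  simpa using (Measure.measurePreserving_sub_left volume t).setIntegral_preimage_emb
    (MeasurableEquiv.subLeft t).measurableEmbedding K (Ioo 0 (t - a))

theorem integrableOn_Ioo_comp_sub_left {K : ℝ → ℝ} {a t : ℝ}
    (hK : IntegrableOn K (Ioo 0 (t - a))) : IntegrableOn (fun s => K (t - s)) (Ioo a t) := by
  simpa [Function.comp_def] using
    ((Measure.measurePreserving_sub_left volume t).integrableOn_comp_preimage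
      (MeasurableEquiv.subLeft t).measurableEmbedding).2 hK

theorem setIntegral_Ioo_kernel_mul_le {K g : ℝ → ℝ} {a t c : ℝ} (ha : 0 ≤ a)
    (hK_nonneg : ∀ u ∈ Ioo 0 (t - a), 0 ≤ K u) (hK_int : IntegrableOn K (Ioo 0 (t - a)))
    (hg_zero : ∀ s ∈ Ioc 0 a, g s = 0) (hg : ∀ s ∈ Ioo a t, 0 ≤ g s ∧ g s ≤ c) :
    ∫ s in Ioo 0 t, K (t - s) * g s ≤ c * ∫ u in Ioo 0 (t - a), K u := by
  have hK_nonneg' : ∀ s ∈ Ioo a t, 0 ≤ K (t - s) := fun s hs =>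
    hK_nonneg _ ⟨by linarith [hs.2], by linarith [hs.1]⟩
  calc ∫ s in Ioo 0 t, K (t - s) * g s = ∫ s in Ioo a t, K (t - s) * g s := by
        refine setIntegral_eq_of_subset_of_forall_sdiff_eq_zero measurableSet_Ioo
          (Ioo_subset_Ioo_left ha) fun s hs => ?_
        have hsa : s ≤ a := not_lt.1 fun h => hs.2 ⟨h, hs.1.2⟩
        rw [hg_zero s ⟨hs.1.1, hsa⟩, mul_zero]
    _ ≤ ∫ s in Ioo a t, K (t - s) * c := by
        refine integral_mono_of_nonneg ?_ ((integrableOn_Ioo_comp_sub_left hK_int).mul_const c) ?_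
        · exact (ae_restrict_iff' measurableSet_Ioo).2 <| .of_forall fun s hs =>
            mul_nonneg (hK_nonneg' s hs) (hg s hs).1
        · exact (ae_restrict_iff' measurableSet_Ioo).2 <| .of_forall fun s hs =>
            mul_le_mul_of_nonneg_left (hg s hs).2 (hK_nonneg' s hs)
    _ = c * ∫ u in Ioo 0 (t - a), K u := by
        rw [integral_mul_const, setIntegral_Ioo_comp_sub_left, mul_comm]

theorem eq_zero_of_le_add_of_eq_zero_of_le {K g : ℝ → ℝ} {T C ε a M : ℝ} (hC : 0 ≤ C)
    (hK_nonneg : ∀ u ∈ Ioo 0 ε, 0 ≤ K u) (hK_int : IntegrableOn K (Ioo 0 ε))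
    (hKε : C * ∫ u in Ioo 0 ε, K u ≤ 1 / 2)
    (hg_nonneg : ∀ t ∈ Icc 0 T, 0 ≤ g t) (hM : ∀ t ∈ Icc 0 T, g t ≤ M)
    (hineq : ∀ t ∈ Icc 0 T, g t ≤ C * ∫ s in Ioo 0 t, K (t - s) * g s)
    (ha : 0 ≤ a) (hzero : ∀ t ∈ Icc 0 T, t ≤ a → g t = 0) :
    ∀ t ∈ Icc 0 T, t ≤ a + ε → g t = 0 := by
  suffices hnonpos : ∀ t ∈ {t | t ∈ Icc 0 T ∧ t ≤ a + ε}, g t ≤ 0 from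
    fun t ht hta => le_antisymm (hnonpos t ⟨ht, hta⟩) (hg_nonneg t ht)
  refine nonpos_of_forall_le_imp_le_half (fun t ht => hM t ht.1) ?_
  rintro c hc t ⟨ht, hta⟩
  have hc0 : 0 ≤ c := (hg_nonneg t ht).trans (hc t ⟨ht, hta⟩)
  rcases le_or_gt t a with hta' | hat
  · rw [hzero t ht hta']
    positivity
  have hsub : Ioo 0 (t - a) ⊆ Ioo 0 ε := Ioo_subset_Ioo_right (by linarith)
  have hwindow : ∀ s ∈ Ioo a t, s ∈ Icc 0 T ∧ s ≤ a + ε := fun s hs =>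
    ⟨⟨by linarith [hs.1], by linarith [hs.2, ht.2]⟩, by linarith [hs.2]⟩
  have hconv : ∫ s in Ioo 0 t, K (t - s) * g s ≤ c * ∫ u in Ioo 0 (t - a), K u :=
    setIntegral_Ioo_kernel_mul_le ha (fun u hu => hK_nonneg u (hsub hu)) (hK_int.mono_set hsub)
      (fun s hs => hzero s ⟨hs.1.le, by linarith [hs.2, ht.2]⟩ hs.2)
      (fun s hs => ⟨hg_nonneg s (hwindow s hs).1, hc s (hwindow s hs)⟩)
  have hmass : ∫ u in Ioo 0 (t - a), K u ≤ ∫ u in Ioo 0 ε, K u :=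
    setIntegral_mono_set hK_int
      ((ae_restrict_iff' measurableSet_Ioo).2 (.of_forall hK_nonneg)) (.of_forall hsub)
  calc g t ≤ C * ∫ s in Ioo 0 t, K (t - s) * g s := hineq t ht
    _ ≤ C * (c * ∫ u in Ioo 0 ε, K u) := by
        gcongr
        exact hconv.trans (mul_le_mul_of_nonneg_left hmass hc0)
    _ = c * (C * ∫ u in Ioo 0 ε, K u) := by ring
    _ ≤ c / 2 := (mul_le_mul_of_nonneg_left hKε hc0).trans_eq (by ring)

theorem gronwall_singular_kernel_general
    (T : ℝ) (hT : 0 < T)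
    (K : ℝ → ℝ)
    (hK_nonneg : ∀ t ∈ Set.Ioo (0:ℝ) T, 0 ≤ K t)
    (hK_int : IntegrableOn K (Set.Ioo (0:ℝ) T))
    (C : ℝ) (hC : 0 ≤ C)
    (g : ℝ → ℝ)
    (hg_nonneg : ∀ t ∈ Set.Icc (0:ℝ) T, 0 ≤ g t)
    (hg_bdd : ∃ M : ℝ, ∀ t ∈ Set.Icc (0:ℝ) T, g t ≤ M)
    (hineq : ∀ t ∈ Set.Icc (0:ℝ) T, g t ≤ C * ∫ s in Set.Ioo (0:ℝ) t, K (t - s) * g s) :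
    ∀ t ∈ Set.Icc (0:ℝ) T, g t = 0 := by
  obtain ⟨M, hM⟩ := hg_bdd
  obtain ⟨ε, ⟨hε, hεT⟩, hKε⟩ : ∃ ε ∈ Ioc 0 T, C * ∫ u in Ioo 0 ε, K u ≤ 1 / 2 := by
    have hsmall := ((tendsto_setIntegral_Ioo_nhdsGT_zero hT hK_int).const_mul C).eventually
      (ge_mem_nhds (by norm_num : C * 0 < 1 / 2))
    exact (Eventually.and (Ioc_mem_nhdsGT hT) hsmall).exists
  have hsub : Ioo 0 ε ⊆ Ioo 0 T := Ioo_subset_Ioo_right hεT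
  have h0 : (0 : ℝ) ∈ Icc 0 T := ⟨le_rfl, hT.le⟩
  have hg0 : g 0 = 0 := le_antisymm (by simpa using hineq 0 h0) (hg_nonneg 0 h0)
  have hvanish : ∀ n : ℕ, ∀ t ∈ Icc 0 T, t ≤ n * ε → g t = 0 := by
    intro n
    induction n with
    | zero => exact fun t ht htn => le_antisymm (by simpa using htn) ht.1 ▸ hg0
    | succ n ih =>
      simpa [add_mul] using eq_zero_of_le_add_of_eq_zero_of_le hC
        (fun u hu => hK_nonneg u (hsub hu)) (hK_int.mono_set hsub) hKε hg_nonneg hM hineq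
        (by positivity) ih
  intro t ht
  obtain ⟨n, hn⟩ := exists_nat_ge (t / ε)
  exact hvanish n t ht ((div_le_iff₀ hε).1 hn)

/-- Generalized Gronwall-type lemma with a possibly singular convolution kernel:
if `K : (0,T) → [0,∞)` is integrable on `(0,T)`, `C ≥ 0`, and `g : [0,T] → [0,∞)` is a
bounded measurable function with `g t ≤ C * ∫₀ᵗ K (t-s) g s ds` for every `t ∈ [0,T]`,
then `g` vanishes identically on `[0,T]`. -/
theorem gronwall_singular_kernel
    (T : ℝ) (hT : 0 < T)
    (K : ℝ → ℝ)
    (hK_nonneg : ∀ t ∈ Set.Ioo (0:ℝ) T, 0 ≤ K t)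
    (hK_int : IntegrableOn K (Set.Ioo (0:ℝ) T))
    (C : ℝ) (hC : 0 ≤ C)
    (g : ℝ → ℝ)
    (hg_meas : Measurable g)
    (hg_nonneg : ∀ t ∈ Set.Icc (0:ℝ) T, 0 ≤ g t)
    (hg_bdd : ∃ M : ℝ, ∀ t ∈ Set.Icc (0:ℝ) T, g t ≤ M)
    (hineq : ∀ t ∈ Set.Icc (0:ℝ) T, g t ≤ C * ∫ s in Set.Ioo (0:ℝ) t, K (t - s) * g s) :
    ∀ t ∈ Set.Icc (0:ℝ) T, g t = 0 :=
  gronwall_singular_kernel_general T hT K hK_nonneg hK_int C hC g hg_nonneg hg_bdd hineq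
end

section
/- Let t₀ > 0 and let h : [0,∞) → [0,∞) be bounded on compact intervals. Assume that for every s₀ ≥ 0, sup_{s ∈ [s₀, s₀+t₀]} h(s) ≤ 3 h(s₀) + (1/2) sup_{s ∈ [s₀, s₀+t₀]} h(s). Then h(t) ≤ 6^{1 + t/t₀} · h(0) for all t ≥ 0. -/
/-!
Since `h` is bounded on `[s₀, s₀ + t₀]`, the supremum there is a finite number `M`, and the
hypothesis `M ≤ 3 h(s₀) + M / 2` can be solved for `M ≤ 6 h(s₀)`. So `h` grows by at most a
factor `6` over any interval of length `t₀`; chaining `⌊t / t₀⌋ + 1` such intervals gives the bound.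
-/

open Set

theorem le_two_mul_of_csSup_le_add_half {S : Set ℝ} {a x : ℝ} (hS : BddAbove S) (hx : x ∈ S)
    (hsup : sSup S ≤ a + 1 / 2 * sSup S) : x ≤ 2 * a := by
  have := le_csSup hS hx
  linarith

section IntervalStep

variable {f : ℝ → ℝ} {C τ : ℝ}
  (hstep : ∀ s, 0 ≤ s → ∀ t ∈ Icc s (s + τ), f t ≤ C * f s)
include hstep

theorem le_pow_mul_of_Icc_step (hτ : 0 ≤ τ) (hC : 0 ≤ C) (n : ℕ) :
    f (n * τ) ≤ C ^ n * f 0 := by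
  induction n with
  | zero => simp
  | succ n ih =>
    have hmem : ((n + 1 : ℕ) : ℝ) * τ ∈ Icc ((n : ℝ) * τ) (n * τ + τ) := by
      push_cast
      constructor <;> nlinarith
    calc f (((n + 1 : ℕ) : ℝ) * τ) ≤ C * f (n * τ) := hstep _ (by positivity) _ hmem
      _ ≤ C * (C ^ n * f 0) := mul_le_mul_of_nonneg_left ih hC
      _ = C ^ (n + 1) * f 0 := by ring

theorem le_rpow_mul_of_Icc_step (hτ : 0 < τ) (hC : 1 ≤ C) (hf0 : 0 ≤ f 0) {t : ℝ} (ht : 0 ≤ t) :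
    f t ≤ C ^ (1 + t / τ) * f 0 := by
  set n := ⌊t / τ⌋₊
  have hn_le : (n : ℝ) * τ ≤ t := (le_div_iff₀ hτ).1 (Nat.floor_le (by positivity))
  have hlt_n : t < (n + 1) * τ := (div_lt_iff₀ hτ).1 (Nat.lt_floor_add_one _)
  have hpow : C ^ (n + 1) ≤ C ^ (1 + t / τ) := by
    rw [← Real.rpow_natCast]
    apply Real.rpow_le_rpow_of_exponent_le hC
    push_cast
    linarith [Nat.floor_le (div_nonneg ht hτ.le)]
  calc f t ≤ C * f (n * τ) := hstep _ (by positivity) t ⟨hn_le, by linarith⟩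
    _ ≤ C * (C ^ n * f 0) :=
        mul_le_mul_of_nonneg_left (le_pow_mul_of_Icc_step hstep hτ.le (by linarith) n)
          (by linarith)
    _ = C ^ (n + 1) * f 0 := by ring
    _ ≤ C ^ (1 + t / τ) * f 0 := mul_le_mul_of_nonneg_right hpow hf0

end IntervalStep

theorem iteration_exponential_bound_general
    (t₀ : ℝ) (ht₀ : 0 < t₀)
    (h : ℝ → ℝ)
    (h_bdd : ∀ T : ℝ, BddAbove (h '' Set.Icc 0 T))
    (hyp : ∀ s₀ : ℝ, 0 ≤ s₀ →
      sSup (h '' Set.Icc s₀ (s₀ + t₀))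
        ≤ 3 * h s₀ + (1 / 2) * sSup (h '' Set.Icc s₀ (s₀ + t₀))) :
    ∀ t : ℝ, 0 ≤ t → h t ≤ (6 : ℝ) ^ (1 + t / t₀) * h 0 := by
  have step : ∀ s₀, 0 ≤ s₀ → ∀ s ∈ Icc s₀ (s₀ + t₀), h s ≤ 6 * h s₀ := by
    intro s₀ hs₀ s hs
    have hbdd : BddAbove (h '' Icc s₀ (s₀ + t₀)) :=
      (h_bdd (s₀ + t₀)).mono (image_mono (Icc_subset_Icc_left hs₀))
    linarith [le_two_mul_of_csSup_le_add_half hbdd (mem_image_of_mem h hs) (hyp s₀ hs₀)]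
  have h0_nonneg : 0 ≤ h 0 := by
    have := step 0 le_rfl 0 ⟨le_rfl, by linarith⟩
    linarith
  exact fun t ht => le_rpow_mul_of_Icc_step step ht₀ (by norm_num) h0_nonneg ht

/-- Iteration lemma for the dimension-free gradient estimate: if `h : [0,∞) → [0,∞)` is
bounded on compact intervals and for every `s₀ ≥ 0`,
`sup_{s ∈ [s₀, s₀+t₀]} h(s) ≤ 3 h(s₀) + (1/2) sup_{s ∈ [s₀, s₀+t₀]} h(s)`,
then `h(t) ≤ 6^{1 + t/t₀} h(0)` for all `t ≥ 0`. -/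
theorem iteration_exponential_bound
    (t₀ : ℝ) (ht₀ : 0 < t₀)
    (h : ℝ → ℝ)
    (h_nonneg : ∀ t, 0 ≤ t → 0 ≤ h t)
    (h_bdd : ∀ T : ℝ, BddAbove (h '' Set.Icc 0 T))
    (hyp : ∀ s₀ : ℝ, 0 ≤ s₀ →
      sSup (h '' Set.Icc s₀ (s₀ + t₀))
        ≤ 3 * h s₀ + (1 / 2) * sSup (h '' Set.Icc s₀ (s₀ + t₀))) :
    ∀ t : ℝ, 0 ≤ t → h t ≤ (6 : ℝ) ^ (1 + t / t₀) * h 0 :=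
  iteration_exponential_bound_general t₀ ht₀ h h_bdd hyp
end

section
/- Let d ≥ 1 be an integer, let α > d be real, let δ > 0, and let ε ∈ (0, (α−d)/α). Then ∫₀¹ s^{−ε} (Σ_{m=1}^∞ m e^{−δ s m^{2α/d}}) ds < ∞. -/
/-!
Since `e^{-x} ≤ x^{-p}` for `x > 0` and `0 < p ≤ 1`, each term of the kernel satisfies
`m e^{-δ s m^β} ≤ (δ s)^{-p} m^{1 - p β}`. With `β = 2α/d` and `d/α < p < 1 - ε` the series
`Σ m^{1 - p β}` converges (`p β > 2`), so the integrand is at most a constant times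
`s^{-(ε + p)}`, which is integrable on `(0, 1)` because `ε + p < 1`.
-/

open MeasureTheory Real
open scoped ENNReal

lemma rpow_le_exp_of_le_one {x p : ℝ} (hx : 0 ≤ x) (hp0 : 0 ≤ p) (hp1 : p ≤ 1) :
    x ^ p ≤ exp x := by
  rcases le_or_gt x 1 with hx1 | hx1
  · exact (rpow_le_one hx hx1 hp0).trans (one_le_exp hx)
  · calc x ^ p ≤ x ^ (1 : ℝ) := rpow_le_rpow_of_exponent_le hx1.le hp1
      _ = x := rpow_one x
      _ ≤ exp x := by linarith [add_one_le_exp x]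

lemma exp_neg_le_rpow_neg {x p : ℝ} (hx : 0 < x) (hp0 : 0 ≤ p) (hp1 : p ≤ 1) :
    exp (-x) ≤ x ^ (-p) := by
  rw [exp_neg, rpow_neg hx.le]
  exact inv_anti₀ (rpow_pos_of_pos hx p) (rpow_le_exp_of_le_one hx.le hp0 hp1)

lemma mul_exp_neg_mul_rpow_le {m δ s β p : ℝ} (hm : 0 < m) (hδs : 0 < δ * s)
    (hp0 : 0 ≤ p) (hp1 : p ≤ 1) :
    m * exp (-δ * s * m ^ β) ≤ (δ * s) ^ (-p) * m ^ (1 - p * β) := by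
  have hmβ : 0 < m ^ β := rpow_pos_of_pos hm β
  calc m * exp (-δ * s * m ^ β) = m * exp (-(δ * s * m ^ β)) := by ring_nf
    _ ≤ m * (δ * s * m ^ β) ^ (-p) := by
      gcongr
      exact exp_neg_le_rpow_neg (mul_pos hδs hmβ) hp0 hp1
    _ = (δ * s) ^ (-p) * m ^ (1 - p * β) := by
      rw [mul_rpow hδs.le hmβ.le, ← rpow_mul hm.le, sub_eq_add_neg, rpow_add hm, rpow_one]
      ring_nf

lemma tsum_pnat_ofReal_rpow_ne_top {c : ℝ} (hc : c < -1) :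
    ∑' m : ℕ+, ENNReal.ofReal (((m : ℕ) : ℝ) ^ c) ≠ ∞ := by
  have hsum : Summable fun m : ℕ+ => ((m : ℕ) : ℝ) ^ c :=
    (summable_nat_rpow.2 hc).comp_injective PNat.coe_injective
  rw [← ENNReal.ofReal_tsum_of_nonneg (fun m => by positivity) hsum]
  exact ENNReal.ofReal_ne_top

lemma setLIntegral_Ioo_rpow_neg_mul_tsum_mul_exp_lt_top {δ β ε p : ℝ} (hδ : 0 < δ)
    (hp0 : 0 ≤ p) (hp1 : p ≤ 1) (hpβ : 2 < p * β) (hεp : ε + p < 1) :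
    ∫⁻ s in Set.Ioo (0:ℝ) 1,
        ENNReal.ofReal (s ^ (-ε)) *
          ∑' m : ℕ+, ENNReal.ofReal
            (((m : ℕ) : ℝ) * exp (-δ * s * ((m : ℕ) : ℝ) ^ β)) < ∞ := by
  set S := ∑' m : ℕ+, ENNReal.ofReal (((m : ℕ) : ℝ) ^ (1 - p * β))
  have hS : S ≠ ∞ := tsum_pnat_ofReal_rpow_ne_top (by linarith)
  have hsingular : IntegrableOn (fun s : ℝ => δ ^ (-p) * s ^ (-(ε + p))) (Set.Ioo 0 1) :=
    ((intervalIntegral.integrableOn_Ioo_rpow_iff one_pos).2 (by linarith)).const_mul _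
  have hbound : ∀ s ∈ Set.Ioo (0:ℝ) 1,
      ENNReal.ofReal (s ^ (-ε)) *
          ∑' m : ℕ+, ENNReal.ofReal (((m : ℕ) : ℝ) * exp (-δ * s * ((m : ℕ) : ℝ) ^ β))
        ≤ ENNReal.ofReal (δ ^ (-p) * s ^ (-(ε + p))) * S := by
    rintro s ⟨hs0, -⟩
    have hδs : 0 < δ * s := mul_pos hδ hs0
    have hterm : ∀ m : ℕ+,
        ENNReal.ofReal (((m : ℕ) : ℝ) * exp (-δ * s * ((m : ℕ) : ℝ) ^ β))
          ≤ ENNReal.ofReal ((δ * s) ^ (-p)) * ENNReal.ofReal (((m : ℕ) : ℝ) ^ (1 - p * β)) :=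
      fun m => by
        rw [← ENNReal.ofReal_mul (by positivity)]
        exact ENNReal.ofReal_le_ofReal
          (mul_exp_neg_mul_rpow_le (by positivity) hδs hp0 hp1)
    have hweight : s ^ (-ε) * (δ * s) ^ (-p) = δ ^ (-p) * s ^ (-(ε + p)) := by
      rw [mul_rpow hδ.le hs0.le, neg_add, rpow_add hs0]
      ring
    calc _ ≤ ENNReal.ofReal (s ^ (-ε)) * (ENNReal.ofReal ((δ * s) ^ (-p)) * S) := by
          gcongr
          exact (ENNReal.tsum_le_tsum hterm).trans_eq ENNReal.tsum_mul_left
      _ = ENNReal.ofReal (δ ^ (-p) * s ^ (-(ε + p))) * S := by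
          rw [← mul_assoc, ← ENNReal.ofReal_mul (by positivity), hweight]
  calc _ ≤ ∫⁻ s in Set.Ioo (0:ℝ) 1, ENNReal.ofReal (δ ^ (-p) * s ^ (-(ε + p))) * S :=
        setLIntegral_mono' measurableSet_Ioo hbound
    _ = (∫⁻ s in Set.Ioo (0:ℝ) 1, ENNReal.ofReal (δ ^ (-p) * s ^ (-(ε + p)))) * S :=
        lintegral_mul_const' _ _ hS
    _ < ∞ := ENNReal.mul_lt_top hsingular.setLIntegral_lt_top hS.lt_top

/-- Singular-weight integrability of the kernel `K_σ(s) = Σ_{m≥1} m e^{-δ s m^{2α/d}}`: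
for `d ≥ 1`, `α > d`, `δ > 0` and `ε ∈ (0, (α-d)/α)`,
`∫₀¹ s^{-ε} Σ_{m≥1} m e^{-δ s m^{2α/d}} ds < ∞`. -/
theorem singular_weight_integrability_case_alpha_gt_d
    (d : ℕ) (hd : 1 ≤ d) (α δ ε : ℝ) (hα : (d : ℝ) < α) (hδ : 0 < δ)
    (hε : ε ∈ Set.Ioo 0 ((α - d) / α)) :
    ∫⁻ s in Set.Ioo (0:ℝ) 1,
        ENNReal.ofReal (s ^ (-ε)) *
          ∑' m : ℕ+, ENNReal.ofReal
            (((m : ℕ) : ℝ) * Real.exp (-δ * s * ((m : ℕ) : ℝ) ^ (2 * α / (d : ℝ)))) < ⊤ := by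
  obtain ⟨hε0, hεα⟩ := hε
  have hd0 : (0:ℝ) < d := by exact_mod_cast hd
  have hα0 : 0 < α := hd0.trans hα
  have hdα : (d : ℝ) / α < 1 - ε := by
    rw [lt_div_iff₀ hα0] at hεα
    rw [div_lt_iff₀ hα0]
    linarith
  obtain ⟨p, hdp, hpε⟩ : ∃ p, (d : ℝ) / α < p ∧ p < 1 - ε :=
    ⟨((d : ℝ) / α + (1 - ε)) / 2, by linarith, by linarith⟩
  have hpβ : 2 < p * (2 * α / d) :=
    calc (2 : ℝ) = (d : ℝ) / α * (2 * α / d) := by field_simp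
      _ < p * (2 * α / d) := by gcongr
  exact setLIntegral_Ioo_rpow_neg_mul_tsum_mul_exp_lt_top hδ
    ((div_pos hd0 hα0).trans hdp).le (by linarith) hpβ (by linarith)
end
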